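/- arXiv:1502.04573 — 2 statements merged into one kernel-verified Lean document; each statement's English description precedes it below -/
import Mathlib

section
/- Let H^{Λ(L)} = Σ_{(i,j)∈E} h^{(i,j)} + Σ_{k∈Λ(L)} h₁^{(k)} be a translationally-invariant nearest-neighbour Hamiltonian on the ν-dimensional cubic lattice Λ(L) = {1,…,L}^ν with open boundary conditions, whose two-body interaction terms h^{(i,j)} are positive semi-definite and have operator norm at most c. Then for all L', n ∈ ℕ and L = nL': n^ν·λ₀(H^{Λ(L')}) ≤ λ₀(H^{Λ(L)}) ≤ n^ν·λ₀(H^{Λ(L')}) + 2ν·n^ν·L'^{ν−1}·c. -/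
open scoped Classical ComplexOrder

noncomputable section

/-- The global matrix of a two-body interaction `h` placed at the pair of sites `i j`
of a finite set `V` of sites: it acts as `h` on sites `i, j` and as the identity
elsewhere (standard basis of the tensor product indexed by configurations `V → S`). -/
def twoBodyAt {V S : Type*} [Fintype V] [DecidableEq V] [Fintype S] [DecidableEq S]
    (h : Matrix (S × S) (S × S) ℂ) (i j : V) :
    Matrix (V → S) (V → S) ℂ :=
  Matrix.of fun x y =>
    (if ∀ k, k ≠ i → k ≠ j → x k = y k then (1 : ℂ) else 0) * h (x i, x j) (y i, y j)

/-- The global matrix of an on-site term `h` at site `i`. -/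
def oneBodyAt {V S : Type*} [Fintype V] [DecidableEq V] [Fintype S] [DecidableEq S]
    (h : Matrix S S ℂ) (i : V) : Matrix (V → S) (V → S) ℂ :=
  Matrix.of fun x y =>
    (if ∀ k, k ≠ i → x k = y k then (1 : ℂ) else 0) * h (x i) (y i)

/-- The translationally-invariant nearest-neighbour Hamiltonian
`H^{Λ(L)} = Σ_{(i,j)∈E} h^{(i,j)} + Σ_k h₁^{(k)}` on the ν-dimensional cubic lattice
`Λ(L) = {1,…,L}^ν` with open boundary conditions, local Hilbert space `ℂ^d`,
two-body term `h k` in lattice direction `k`, and on-site term `h1`. -/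
def hamND (ν d L : ℕ) (h : Fin ν → Matrix (Fin d × Fin d) (Fin d × Fin d) ℂ)
    (h1 : Matrix (Fin d) (Fin d) ℂ) :
    Matrix ((Fin ν → Fin L) → Fin d) ((Fin ν → Fin L) → Fin d) ℂ :=
  (∑ k : Fin ν, ∑ p : Fin ν → Fin L, ∑ q : Fin ν → Fin L,
      if (∀ m, m ≠ k → p m = q m) ∧ (q k : ℕ) = (p k : ℕ) + 1
      then twoBodyAt (h k) p q else 0)
  + ∑ p : Fin ν → Fin L, oneBodyAt h1 p

/-- The set of real points of the spectrum of a matrix. -/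
def realSpec {n : Type*} [Fintype n] [DecidableEq n] (M : Matrix n n ℂ) : Set ℝ :=
  {x : ℝ | (x : ℂ) ∈ spectrum ℂ M}

/-- The ground state energy `λ₀(M)`: the smallest (real) eigenvalue. -/
def lam0 {n : Type*} [Fintype n] [DecidableEq n] (M : Matrix n n ℂ) : ℝ :=
  sInf (realSpec M)

/-- Operator norm of a matrix acting on the Euclidean (ℓ²) space. -/
def opNorm {n : Type*} [Fintype n] [DecidableEq n] (M : Matrix n n ℂ) : ℝ :=
  ‖Matrix.toEuclideanCLM (𝕜 := ℂ) M‖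

/-!
Cut `Λ(nL)` into `n^ν` translates of `Λ(L)`. Then `H^{Λ(nL)}` is the sum of the `n^ν` block
Hamiltonians, each acting as `H^{Λ(L)} ⊗ 1`, plus the bonds joining neighbouring blocks, of which
there are at most `n^ν L^{ν-1}` in each direction. The bond terms are positive semidefinite, so
`H^{Λ(nL)} ≥ n^ν λ₀(H^{Λ(L)})`. Conversely, in the product of block ground states every block
contributes exactly `λ₀(H^{Λ(L)})` and every joining bond at most `c`, and the variational
principle gives the upper bound.
-/

namespace GroundStateEnergy

open Matrix
open scoped Kronecker Finset

section QuadForm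

variable {ι : Type*} [Fintype ι]

def quadForm (M : Matrix ι ι ℂ) (v : ι → ℂ) : ℝ := (star v ⬝ᵥ M *ᵥ v).re

@[simp] lemma quadForm_add (M N : Matrix ι ι ℂ) (v : ι → ℂ) :
    quadForm (M + N) v = quadForm M v + quadForm N v := by
  simp [quadForm, add_mulVec, dotProduct_add]

@[simp] lemma quadForm_zero (v : ι → ℂ) : quadForm (0 : Matrix ι ι ℂ) v = 0 := by
  simp [quadForm]

@[simp] lemma quadForm_sum {γ : Type*} (s : Finset γ) (M : γ → Matrix ι ι ℂ) (v : ι → ℂ) :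
    quadForm (∑ i ∈ s, M i) v = ∑ i ∈ s, quadForm (M i) v := by
  simp [quadForm, sum_mulVec, dotProduct_sum, Complex.re_sum]

lemma quadForm_ite (P : Prop) [Decidable P] (M : Matrix ι ι ℂ) (v : ι → ℂ) :
    quadForm (if P then M else 0) v = if P then quadForm M v else 0 := by
  split_ifs <;> simp

lemma quadForm_of_mulVec_eq [DecidableEq ι] {M : Matrix ι ι ℂ} {v : ι → ℂ} {r : ℝ}
    (hv : M *ᵥ v = r • v) : quadForm M v = r * quadForm 1 v := by
  simp [quadForm, hv, dotProduct_smul]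

lemma quadForm_one_eq_norm_sq [DecidableEq ι] (v : ι → ℂ) :
    quadForm 1 v = ‖(WithLp.toLp 2 v : EuclideanSpace ℂ ι)‖ ^ 2 := by
  rw [← inner_self_eq_norm_sq (𝕜 := ℂ), EuclideanSpace.inner_eq_star_dotProduct, quadForm,
    one_mulVec, dotProduct_comm]
  rfl

lemma quadForm_one_nonneg [DecidableEq ι] (v : ι → ℂ) : 0 ≤ quadForm 1 v := by
  rw [quadForm_one_eq_norm_sq]; positivity

lemma quadForm_one_pos [DecidableEq ι] {v : ι → ℂ} (hv : v ≠ 0) : 0 < quadForm 1 v := by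
  rw [quadForm_one_eq_norm_sq]
  exact pow_pos (norm_pos_iff.mpr fun h => hv (congrArg WithLp.ofLp h)) 2

lemma quadForm_le_opNorm_mul [DecidableEq ι] (M : Matrix ι ι ℂ) (v : ι → ℂ) :
    quadForm M v ≤ opNorm M * quadForm 1 v := by
  set x : EuclideanSpace ℂ ι := WithLp.toLp 2 v
  have hx : quadForm M v = RCLike.re (inner ℂ x (toEuclideanCLM (𝕜 := ℂ) M x)) := by
    rw [EuclideanSpace.inner_eq_star_dotProduct, toEuclideanCLM_toLp, dotProduct_comm]
    rfl
  rw [hx, quadForm_one_eq_norm_sq, opNorm]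
  calc RCLike.re (inner ℂ x (toEuclideanCLM (𝕜 := ℂ) M x))
      ≤ ‖x‖ * ‖toEuclideanCLM (𝕜 := ℂ) M x‖ := re_inner_le_norm _ _
    _ ≤ ‖x‖ * (‖toEuclideanCLM (𝕜 := ℂ) M‖ * ‖x‖) :=
        mul_le_mul_of_nonneg_left (ContinuousLinearMap.le_opNorm _ _) (norm_nonneg _)
    _ = ‖toEuclideanCLM (𝕜 := ℂ) M‖ * ‖x‖ ^ 2 := by ring

lemma quadForm_nonneg {M : Matrix ι ι ℂ} (hM : M.PosSemidef) (v : ι → ℂ) : 0 ≤ quadForm M v :=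
  (Complex.le_def.mp (hM.dotProduct_mulVec_nonneg v)).1

end QuadForm

section GroundEnergy

variable {ι : Type*} [Fintype ι] [DecidableEq ι]

lemma realSpec_eq_spectrum (M : Matrix ι ι ℂ) : realSpec M = spectrum ℝ M := by
  ext x
  exact spectrum.algebraMap_mem_iff (S := ℂ) (R := ℝ) (A := Matrix ι ι ℂ)

lemma lam0_le_of_mem_spectrum {M : Matrix ι ι ℂ} {x : ℝ}
    (hx : x ∈ spectrum ℝ M) : lam0 M ≤ x := by
  rw [lam0, realSpec_eq_spectrum]
  exact csInf_le finite_real_spectrum.bddBelow hx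

lemma lam0_mem_range_eigenvalues [Nonempty ι] {M : Matrix ι ι ℂ} (hM : M.IsHermitian) :
    lam0 M ∈ Set.range hM.eigenvalues := by
  rw [lam0, realSpec_eq_spectrum, hM.spectrum_real_eq_range_eigenvalues]
  exact Set.Nonempty.csInf_mem (Set.range_nonempty _) (Set.finite_range _)

lemma exists_mulVec_eq_lam0_smul [Nonempty ι] {M : Matrix ι ι ℂ} (hM : M.IsHermitian) :
    ∃ v ≠ 0, M *ᵥ v = lam0 M • v := by
  obtain ⟨j, hj⟩ := lam0_mem_range_eigenvalues hM
  exact ⟨_, fun h => (hM.eigenvectorBasis).orthonormal.ne_zero j (congrArg (WithLp.toLp 2) h),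
    hj ▸ hM.mulVec_eigenvectorBasis j⟩

lemma posSemidef_sub_lam0 {M : Matrix ι ι ℂ} (hM : M.IsHermitian) :
    (M - algebraMap ℝ _ (lam0 M)).PosSemidef := by
  have hH : (M - algebraMap ℝ _ (lam0 M)).IsHermitian :=
    hM.sub (by simp [IsHermitian, Algebra.algebraMap_eq_smul_one])
  refine hH.posSemidef_iff_eigenvalues_nonneg.mpr fun i => ?_
  have hi := hH.eigenvalues_mem_spectrum_real i
  rw [← spectrum.sub_singleton_eq, Set.mem_sub] at hi
  obtain ⟨x, hx, r, rfl, hxr⟩ := hi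
  have := lam0_le_of_mem_spectrum hx
  simp only [Pi.zero_apply]
  linarith

lemma lam0_mul_quadForm_one_le {M : Matrix ι ι ℂ} (hM : M.IsHermitian) (v : ι → ℂ) :
    lam0 M * quadForm 1 v ≤ quadForm M v := by
  have h := quadForm_nonneg (posSemidef_sub_lam0 hM) v
  rwa [Algebra.algebraMap_eq_smul_one, quadForm, sub_mulVec, dotProduct_sub, Complex.sub_re,
    smul_mulVec, dotProduct_smul, Complex.real_smul, Complex.re_ofReal_mul, ← quadForm,
    ← quadForm, sub_nonneg] at h

lemma le_lam0_of_forall_mul_quadForm_one_le [Nonempty ι] {M : Matrix ι ι ℂ}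
    (hM : M.IsHermitian) {r : ℝ} (h : ∀ v, r * quadForm 1 v ≤ quadForm M v) : r ≤ lam0 M := by
  obtain ⟨v, hv0, hv⟩ := exists_mulVec_eq_lam0_smul hM
  have := h v
  rw [quadForm_of_mulVec_eq hv] at this
  exact le_of_mul_le_mul_right this (quadForm_one_pos hv0)

lemma lam0_zero : lam0 (0 : Matrix ι ι ℂ) = 0 := by
  rw [lam0, realSpec_eq_spectrum, isHermitian_zero.spectrum_real_eq_range_eigenvalues]
  rcases isEmpty_or_nonempty ι with hι | hι
  · rw [Set.range_eq_empty, Real.sInf_empty]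
  · rw [(isHermitian_zero.eigenvalues_eq_zero_iff).mpr rfl, Pi.zero_def, Set.range_const,
      csInf_singleton]

end GroundEnergy

section Ampliation

variable {X W Y : Type*} [DecidableEq Y]

def ampliation (e : X ≃ W × Y) : Matrix W W ℂ →ₗ[ℂ] Matrix X X ℂ where
  toFun M := reindex e.symm e.symm (M ⊗ₖ (1 : Matrix Y Y ℂ))
  map_add' M N := by simp [add_kronecker, submatrix_add]
  map_smul' a M := by simp [smul_kronecker, submatrix_smul]

lemma ampliation_apply (e : X ≃ W × Y) (M : Matrix W W ℂ) (x x' : X) :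
    ampliation e M x x' = if (e x).2 = (e x').2 then M (e x).1 (e x').1 else 0 := by
  simp [ampliation, one_apply]

def slice (e : X ≃ W × Y) (v : X → ℂ) (y : Y) : W → ℂ := fun w => v (e.symm (w, y))

lemma ampliation_one [DecidableEq X] [DecidableEq W] (e : X ≃ W × Y) :
    ampliation e (1 : Matrix W W ℂ) = 1 := by
  simp [ampliation]

variable [Fintype X] [Fintype W] [Fintype Y]

lemma dotProduct_kronecker_one_mulVec (M : Matrix W W ℂ) (u : W × Y → ℂ) :
    star u ⬝ᵥ (M ⊗ₖ (1 : Matrix Y Y ℂ)) *ᵥ u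
      = ∑ y, star (fun w => u (w, y)) ⬝ᵥ M *ᵥ fun w => u (w, y) := by
  simp only [dotProduct, Pi.star_apply, mulVec, kroneckerMap_apply, one_apply, mul_ite, mul_one,
    mul_zero, ite_mul, zero_mul, Fintype.sum_prod_type, Finset.sum_ite_eq, Finset.mem_univ,
    if_true, Finset.mul_sum]
  rw [Finset.sum_comm]

lemma quadForm_ampliation (e : X ≃ W × Y) (M : Matrix W W ℂ) (v : X → ℂ) :
    quadForm (ampliation e M) v = ∑ y, quadForm M (slice e v y) := by
  simp only [quadForm, ampliation, LinearMap.coe_mk, AddHom.coe_mk, reindex_apply,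
    Equiv.symm_symm, submatrix_mulVec_equiv, ← comp_equiv_symm_dotProduct, ← Complex.re_sum]
  exact congrArg Complex.re (dotProduct_kronecker_one_mulVec M (v ∘ e.symm))

lemma quadForm_ampliation_nonneg {M : Matrix W W ℂ} (hM : M.PosSemidef) (e : X ≃ W × Y)
    (v : X → ℂ) : 0 ≤ quadForm (ampliation e M) v := by
  rw [quadForm_ampliation]
  exact Finset.sum_nonneg fun y _ => quadForm_nonneg hM _

variable [DecidableEq X] [DecidableEq W]

lemma quadForm_one_eq_sum_slice (e : X ≃ W × Y) (v : X → ℂ) :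
    quadForm 1 v = ∑ y, quadForm 1 (slice e v y) := by
  rw [← quadForm_ampliation, ampliation_one]

lemma lam0_mul_quadForm_one_le_ampliation {M : Matrix W W ℂ} (hM : M.IsHermitian)
    (e : X ≃ W × Y) (v : X → ℂ) : lam0 M * quadForm 1 v ≤ quadForm (ampliation e M) v := by
  rw [quadForm_ampliation, quadForm_one_eq_sum_slice e, Finset.mul_sum]
  exact Finset.sum_le_sum fun y _ => lam0_mul_quadForm_one_le hM _

lemma quadForm_ampliation_le (M : Matrix W W ℂ) (e : X ≃ W × Y) (v : X → ℂ) :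
    quadForm (ampliation e M) v ≤ opNorm M * quadForm 1 v := by
  rw [quadForm_ampliation, quadForm_one_eq_sum_slice e, Finset.mul_sum]
  exact Finset.sum_le_sum fun y _ => quadForm_le_opNorm_mul M _

lemma quadForm_ampliation_of_slice_eigen {M : Matrix W W ℂ} {r : ℝ} (e : X ≃ W × Y)
    {v : X → ℂ} (hv : ∀ y, M *ᵥ slice e v y = r • slice e v y) :
    quadForm (ampliation e M) v = r * quadForm 1 v := by
  rw [quadForm_ampliation, quadForm_one_eq_sum_slice e, Finset.mul_sum]
  exact Finset.sum_congr rfl fun y _ => quadForm_of_mulVec_eq (hv y)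

end Ampliation

section ConfigSplit

variable {U V S : Type*}

def configSplit (f : U ↪ V) : (V → S) ≃ (U → S) × ({v // v ∉ Set.range f} → S) :=
  (Equiv.piEquivPiSubtypeProd (· ∈ Set.range f) fun _ => S).trans
    ((Equiv.arrowCongr (Equiv.ofInjective f f.injective).symm (Equiv.refl S)).prodCongr
      (Equiv.refl _))

@[simp] lemma configSplit_apply (f : U ↪ V) (x : V → S) :
    configSplit f x = (fun u => x (f u), fun w : {v // v ∉ Set.range f} => x w) := by
  ext u <;> simp [configSplit]

lemma configSplit_symm_apply_self (f : U ↪ V) (t : U → S) (y : {v // v ∉ Set.range f} → S)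
    (u : U) : (configSplit f).symm (t, y) (f u) = t u := by
  simp [configSplit, Equiv.piEquivPiSubtypeProd]

lemma configSplit_symm_apply_of_not_mem (f : U ↪ V) (t : U → S)
    (y : {v // v ∉ Set.range f} → S) {v : V} (hv : v ∉ Set.range f) :
    (configSplit f).symm (t, y) v = y ⟨v, hv⟩ := by
  simp only [configSplit, Equiv.symm_trans_apply, Equiv.prodCongr_symm,
    Equiv.prodCongr_apply, Prod.map, Equiv.piEquivPiSubtypeProd_symm_apply]
  exact dif_neg hv

end ConfigSplit

section SiteOperators

variable {U V S : Type*} [Fintype U] [DecidableEq U] [Fintype V] [DecidableEq V] [Fintype S]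
  [DecidableEq S]

lemma conjTranspose_twoBodyAt (g : Matrix (S × S) (S × S) ℂ) (i j : V) :
    (twoBodyAt g i j)ᴴ = twoBodyAt gᴴ i j := by
  ext x y
  simp only [twoBodyAt, conjTranspose_apply, of_apply, star_mul', eq_comm (a := x _)]
  split_ifs <;> simp

lemma conjTranspose_oneBodyAt (g : Matrix S S ℂ) (i : V) :
    (oneBodyAt g i)ᴴ = oneBodyAt gᴴ i := by
  ext x y
  simp only [oneBodyAt, conjTranspose_apply, of_apply, star_mul', eq_comm (a := x _)]
  split_ifs <;> simp

def pairSplit {i j : V} (hij : i ≠ j) : (V → S) ≃ (S × S) × ({v // v ≠ i ∧ v ≠ j} → S) where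
  toFun x := ((x i, x j), fun v => x v)
  invFun z v := if hi : v = i then z.1.1 else if hj : v = j then z.1.2 else z.2 ⟨v, hi, hj⟩
  left_inv x := by
    funext v
    by_cases hi : v = i
    · subst hi; simp
    · by_cases hj : v = j
      · subst hj; simp [hi]
      · simp [hi, hj]
  right_inv z := by
    refine Prod.ext (Prod.ext ?_ ?_) (funext fun v => ?_)
    · simp
    · simp [hij.symm]
    · simp [v.2.1, v.2.2]

lemma twoBodyAt_eq_ampliation (g : Matrix (S × S) (S × S) ℂ) {i j : V} (hij : i ≠ j) :
    twoBodyAt g i j = ampliation (pairSplit hij) g := by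
  ext x y
  rw [ampliation_apply]
  simp only [twoBodyAt, of_apply, pairSplit, Equiv.coe_fn_mk, boole_mul, funext_iff,
    Subtype.forall]
  exact if_congr (by grind) rfl rfl

lemma quadForm_twoBodyAt_nonneg {g : Matrix (S × S) (S × S) ℂ} (hg : g.PosSemidef) {i j : V}
    (hij : i ≠ j) (v : (V → S) → ℂ) : 0 ≤ quadForm (twoBodyAt g i j) v := by
  rw [twoBodyAt_eq_ampliation g hij]
  exact quadForm_ampliation_nonneg hg _ v

lemma quadForm_twoBodyAt_le (g : Matrix (S × S) (S × S) ℂ) {i j : V} (hij : i ≠ j)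
    (v : (V → S) → ℂ) : quadForm (twoBodyAt g i j) v ≤ opNorm g * quadForm 1 v := by
  rw [twoBodyAt_eq_ampliation g hij]
  exact quadForm_ampliation_le g _ v

lemma ampliation_configSplit_twoBodyAt (f : U ↪ V) (g : Matrix (S × S) (S × S) ℂ) (i j : U) :
    ampliation (configSplit f) (twoBodyAt g i j) = twoBodyAt g (f i) (f j) := by
  ext x y
  rw [ampliation_apply]
  simp only [configSplit_apply, twoBodyAt, of_apply, boole_mul, ← ite_and, funext_iff,
    Subtype.forall]
  refine if_congr ⟨fun ⟨hout, hin⟩ v hvi hvj => ?_, fun h => ⟨fun v hv => ?_, fun k hki hkj => ?_⟩⟩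
    rfl rfl
  · by_cases hv : v ∈ Set.range f
    · obtain ⟨k, rfl⟩ := hv
      exact hin k (fun h => hvi (h ▸ rfl)) (fun h => hvj (h ▸ rfl))
    · exact hout v hv
  · exact h v (fun h' => hv ⟨i, h'.symm⟩) (fun h' => hv ⟨j, h'.symm⟩)
  · exact h (f k) (f.injective.ne hki) (f.injective.ne hkj)

lemma ampliation_configSplit_oneBodyAt (f : U ↪ V) (g : Matrix S S ℂ) (i : U) :
    ampliation (configSplit f) (oneBodyAt g i) = oneBodyAt g (f i) := by
  ext x y
  rw [ampliation_apply]
  simp only [configSplit_apply, oneBodyAt, of_apply, boole_mul, ← ite_and, funext_iff,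
    Subtype.forall]
  refine if_congr ⟨fun ⟨hout, hin⟩ v hvi => ?_, fun h => ⟨fun v hv => ?_, fun k hki => ?_⟩⟩
    rfl rfl
  · by_cases hv : v ∈ Set.range f
    · obtain ⟨k, rfl⟩ := hv
      exact hin k (fun h => hvi (h ▸ rfl))
    · exact hout v hv
  · exact h v (fun h' => hv ⟨i, h'.symm⟩)
  · exact h (f k) (f.injective.ne hki)

end SiteOperators

section Blocks

variable {ν n L : ℕ}

def blockEquiv (n L : ℕ) : (Fin ν → Fin (n * L)) ≃ (Fin ν → Fin n) × (Fin ν → Fin L) :=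
  (Equiv.piCongrRight fun _ => finProdFinEquiv.symm).trans (Equiv.arrowProdEquivProdArrow _ _ _)

lemma val_blockEquiv_symm_apply (b : Fin ν → Fin n) (r : Fin ν → Fin L) (m : Fin ν) :
    ((blockEquiv n L).symm (b, r) m : ℕ) = r m + L * b m := by
  simp [blockEquiv, Equiv.arrowProdEquivProdArrow]

lemma val_blockEquiv_snd (p : Fin ν → Fin (n * L)) (m : Fin ν) :
    ((blockEquiv n L p).2 m : ℕ) = p m % L := by
  simp [blockEquiv, Equiv.arrowProdEquivProdArrow]

lemma val_blockEquiv_fst (p : Fin ν → Fin (n * L)) (m : Fin ν) :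
    ((blockEquiv n L p).1 m : ℕ) = p m / L := by
  simp [blockEquiv, Equiv.arrowProdEquivProdArrow]

def boxEmbedding (n L : ℕ) (b : Fin ν → Fin n) : (Fin ν → Fin L) ↪ (Fin ν → Fin (n * L)) where
  toFun r := (blockEquiv n L).symm (b, r)
  inj' r r' h := by simpa using congrArg (fun p => (blockEquiv n L p).2) h

lemma boxEmbedding_apply (b : Fin ν → Fin n) (r : Fin ν → Fin L) :
    boxEmbedding n L b r = (blockEquiv n L).symm (b, r) := rfl

@[simp] lemma blockEquiv_boxEmbedding (b : Fin ν → Fin n) (r : Fin ν → Fin L) :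
    blockEquiv n L (boxEmbedding n L b r) = (b, r) :=
  (blockEquiv n L).apply_symm_apply _

lemma mem_range_boxEmbedding_iff (b : Fin ν → Fin n) (p : Fin ν → Fin (n * L)) :
    p ∈ Set.range (boxEmbedding n L b) ↔ (blockEquiv n L p).1 = b := by
  refine ⟨by rintro ⟨r, rfl⟩; simp, fun h => ⟨(blockEquiv n L p).2, ?_⟩⟩
  simp [boxEmbedding, ← h]

lemma sum_eq_sum_boxEmbedding {M : Type*} [AddCommMonoid M] (F : (Fin ν → Fin (n * L)) → M) :
    ∑ p, F p = ∑ b, ∑ r, F (boxEmbedding n L b r) := by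
  rw [← (blockEquiv n L).symm.sum_comp, Fintype.sum_prod_type]
  rfl

end Blocks

section Bonds

lemma add_one_div_eq_div_of_mod_ne {a L : ℕ} (h : a % L ≠ L - 1) : (a + 1) / L = a / L := by
  refine Nat.succ_div_of_not_dvd fun ⟨c, hc⟩ => h ?_
  rcases c with _ | c
  · omega
  · rw [Nat.mul_succ] at hc
    have hL : 0 < L := by rcases L with _ | L <;> simp_all
    rw [show a = L * c + (L - 1) by omega, Nat.mul_add_mod, Nat.mod_eq_of_lt (by omega)]

variable {ν N : ℕ}

def IsBond (k : Fin ν) (p q : Fin ν → Fin N) : Prop :=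
  (∀ m, m ≠ k → p m = q m) ∧ (q k : ℕ) = (p k : ℕ) + 1

instance (k : Fin ν) (p q : Fin ν → Fin N) : Decidable (IsBond k p q) :=
  inferInstanceAs (Decidable (_ ∧ _))

lemma hamND_eq (d L : ℕ) (h : Fin ν → Matrix (Fin d × Fin d) (Fin d × Fin d) ℂ)
    (h1 : Matrix (Fin d) (Fin d) ℂ) :
    hamND ν d L h h1 = (∑ k, ∑ p, ∑ q, if IsBond k p q then twoBodyAt (h k) p q else 0)
      + ∑ p, oneBodyAt h1 p := rfl

lemma IsBond.ne {k : Fin ν} {p q : Fin ν → Fin N} (hpq : IsBond k p q) : p ≠ q := by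
  rintro rfl
  exact absurd hpq.2 (by omega)

lemma IsBond.unique {k : Fin ν} {p q q' : Fin ν → Fin N} (hq : IsBond k p q)
    (hq' : IsBond k p q') : q = q' := by
  funext m
  by_cases hm : m = k
  · subst hm
    exact Fin.ext (hq.2.trans hq'.2.symm)
  · exact (hq.1 m hm).symm.trans (hq'.1 m hm)

variable {n L : ℕ}

lemma isBond_boxEmbedding_iff (k : Fin ν) (b : Fin ν → Fin n) (r r' : Fin ν → Fin L) :
    IsBond k (boxEmbedding n L b r) (boxEmbedding n L b r') ↔ IsBond k r r' := by
  simp only [IsBond, Fin.ext_iff, boxEmbedding_apply, val_blockEquiv_symm_apply, add_left_inj]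
  exact and_congr_right' (by omega)

lemma IsBond.val_blockEquiv_snd_eq {k : Fin ν} {p q : Fin ν → Fin (n * L)} (hpq : IsBond k p q)
    (hb : (blockEquiv n L p).1 ≠ (blockEquiv n L q).1) : ((blockEquiv n L p).2 k : ℕ) = L - 1 := by
  refine by_contra fun hk => hb (funext fun m => Fin.ext ?_)
  rw [val_blockEquiv_snd] at hk
  rw [val_blockEquiv_fst, val_blockEquiv_fst]
  by_cases hm : m = k
  · rw [hm, hpq.2, add_one_div_eq_div_of_mod_ne hk]
  · rw [hpq.1 m hm]

end Bonds

section BlockDecomposition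

variable {ν d n L : ℕ} (h : Fin ν → Matrix (Fin d × Fin d) (Fin d × Fin d) ℂ)
  (h1 : Matrix (Fin d) (Fin d) ℂ)

def boundaryHam (n L : ℕ) :
    Matrix ((Fin ν → Fin (n * L)) → Fin d) ((Fin ν → Fin (n * L)) → Fin d) ℂ :=
  ∑ k, ∑ p, ∑ q, if IsBond k p q ∧ (blockEquiv n L p).1 ≠ (blockEquiv n L q).1
    then twoBodyAt (h k) p q else 0

lemma ampliation_hamND (b : Fin ν → Fin n) :
    ampliation (configSplit (boxEmbedding n L b)) (hamND ν d L h h1)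
      = (∑ k, ∑ r, ∑ r', if IsBond k r r'
          then twoBodyAt (h k) (boxEmbedding n L b r) (boxEmbedding n L b r') else 0)
        + ∑ r, oneBodyAt h1 (boxEmbedding n L b r) := by
  simp [hamND_eq, map_sum, apply_ite, ampliation_configSplit_twoBodyAt,
    ampliation_configSplit_oneBodyAt]

lemma sum_isBond_sameBlock (k : Fin ν) (b : Fin ν → Fin n) (r : Fin ν → Fin L) :
    ∑ q, (if IsBond k (boxEmbedding n L b r) q
        ∧ (blockEquiv n L (boxEmbedding n L b r)).1 = (blockEquiv n L q).1
      then twoBodyAt (h k) (boxEmbedding n L b r) q else 0)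
      = ∑ r', if IsBond k r r'
          then twoBodyAt (h k) (boxEmbedding n L b r) (boxEmbedding n L b r') else 0 := by
  refine (Fintype.sum_of_injective _ (boxEmbedding n L b).injective _ _ (fun q hq => ?_)
    (fun r' => ?_)).symm
  · rw [blockEquiv_boxEmbedding,
      if_neg fun hc => hq ((mem_range_boxEmbedding_iff b q).mpr hc.2.symm)]
  · simp [isBond_boxEmbedding_iff]

lemma hamND_mul_eq :
    hamND ν d (n * L) h h1
      = ∑ b, ampliation (configSplit (boxEmbedding n L b)) (hamND ν d L h h1)
        + boundaryHam h n L := by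
  have hsplit : ∀ k p q, (if IsBond k p q then twoBodyAt (h k) p q else 0)
      = (if IsBond k p q ∧ (blockEquiv n L p).1 = (blockEquiv n L q).1
          then twoBodyAt (h k) p q else 0)
        + (if IsBond k p q ∧ (blockEquiv n L p).1 ≠ (blockEquiv n L q).1
          then twoBodyAt (h k) p q else 0) := by
    intros; split_ifs <;> simp_all
  have hinterior : ∀ k, ∑ p, ∑ q, (if IsBond k p q ∧ (blockEquiv n L p).1 = (blockEquiv n L q).1
      then twoBodyAt (h k) p q else 0)
      = ∑ b, ∑ r, ∑ r', if IsBond k r r'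
          then twoBodyAt (h k) (boxEmbedding n L b r) (boxEmbedding n L b r') else 0 := fun k => by
    rw [sum_eq_sum_boxEmbedding]
    simp only [sum_isBond_sameBlock]
  rw [hamND_eq d (n * L), sum_eq_sum_boxEmbedding (oneBodyAt h1)]
  simp only [hsplit, Finset.sum_add_distrib, hinterior, ampliation_hamND, boundaryHam]
  rw [Finset.sum_comm (γ := Fin ν)]
  abel

end BlockDecomposition

section BoundaryBounds

variable {ν d n L : ℕ} (h : Fin ν → Matrix (Fin d × Fin d) (Fin d × Fin d) ℂ)

/-- A bond between two blocks is determined by the block of its first site and the position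
of that site inside the block in the directions other than `k`. -/
lemma card_boundaryBonds_le (k : Fin ν) :
    #{pq : (Fin ν → Fin (n * L)) × (Fin ν → Fin (n * L)) |
        IsBond k pq.1 pq.2 ∧ (blockEquiv n L pq.1).1 ≠ (blockEquiv n L pq.2).1}
      ≤ n ^ ν * L ^ (ν - 1) := by
  let code (pq : (Fin ν → Fin (n * L)) × (Fin ν → Fin (n * L))) :
      (Fin ν → Fin n) × ({m // m ≠ k} → Fin L) :=
    ((blockEquiv n L pq.1).1, fun m => (blockEquiv n L pq.1).2 m)
  have hinj : Set.InjOn code {pq | IsBond k pq.1 pq.2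
      ∧ (blockEquiv n L pq.1).1 ≠ (blockEquiv n L pq.2).1} := by
    rintro ⟨p, q⟩ ⟨hpq, hb⟩ ⟨p', q'⟩ ⟨hpq', hb'⟩ hcode
    obtain ⟨hblock, hpos⟩ := Prod.mk.inj hcode
    have hp : p = p' := (blockEquiv n L).injective <| Prod.ext hblock <| funext fun m => by
      by_cases hm : m = k
      · subst hm
        exact Fin.ext ((hpq.val_blockEquiv_snd_eq hb).trans (hpq'.val_blockEquiv_snd_eq hb').symm)
      · exact congrFun hpos ⟨m, hm⟩
    subst hp
    exact congrArg _ (hpq.unique hpq')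
  calc _ ≤ (Finset.univ : Finset ((Fin ν → Fin n) × ({m // m ≠ k} → Fin L))).card :=
        Finset.card_le_card_of_injOn code (fun _ _ => Finset.mem_coe.mpr (Finset.mem_univ _))
          (by simpa using hinj)
    _ = n ^ ν * L ^ (ν - 1) := by simp

lemma quadForm_boundaryHam_nonneg (hpsd : ∀ k, (h k).PosSemidef)
    (v : ((Fin ν → Fin (n * L)) → Fin d) → ℂ) : 0 ≤ quadForm (boundaryHam h n L) v := by
  simp only [boundaryHam, quadForm_sum, quadForm_ite]
  refine Finset.sum_nonneg fun k _ => Finset.sum_nonneg fun p _ => Finset.sum_nonneg fun q _ => ?_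
  split_ifs with hC
  · exact quadForm_twoBodyAt_nonneg (hpsd k) hC.1.ne v
  · exact le_rfl

lemma quadForm_boundaryHam_le {c : ℝ} (hc : ∀ k, opNorm (h k) ≤ c)
    (v : ((Fin ν → Fin (n * L)) → Fin d) → ℂ) :
    quadForm (boundaryHam h n L) v ≤ ν * (n ^ ν * L ^ (ν - 1) : ℕ) * c * quadForm 1 v := by
  simp only [boundaryHam, quadForm_sum, quadForm_ite]
  calc _ ≤ ∑ k : Fin ν, ∑ p, ∑ q, if IsBond k p q ∧ (blockEquiv n L p).1 ≠ (blockEquiv n L q).1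
          then c * quadForm 1 v else 0 := by
        refine Finset.sum_le_sum fun k _ => Finset.sum_le_sum fun p _ =>
          Finset.sum_le_sum fun q _ => ?_
        split_ifs with hC
        · exact (quadForm_twoBodyAt_le _ hC.1.ne v).trans
            (mul_le_mul_of_nonneg_right (hc k) (quadForm_one_nonneg v))
        · exact le_rfl
    _ ≤ ∑ _k : Fin ν, ((n ^ ν * L ^ (ν - 1) : ℕ) : ℝ) * (c * quadForm 1 v) := by
        refine Finset.sum_le_sum fun k _ => ?_
        rw [← Fintype.sum_prod_type' (fun p q => if IsBond k p q
          ∧ (blockEquiv n L p).1 ≠ (blockEquiv n L q).1 then c * quadForm 1 v else 0),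
          ← Finset.sum_filter, Finset.sum_const, nsmul_eq_mul]
        exact mul_le_mul_of_nonneg_right (by exact_mod_cast card_boundaryBonds_le k)
          (mul_nonneg ((norm_nonneg _).trans (hc k)) (quadForm_one_nonneg v))
    _ = _ := by
        simp only [Nat.cast_mul, Nat.cast_pow, Finset.sum_const, Finset.card_univ, Fintype.card_fin,
          nsmul_eq_mul]
        ring

end BoundaryBounds

section ProductState

variable {ν n L : ℕ} {S : Type*}

def productState (n L : ℕ) (u : ((Fin ν → Fin L) → S) → ℂ) : ((Fin ν → Fin (n * L)) → S) → ℂ :=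
  fun x => ∏ b, u fun r => x (boxEmbedding n L b r)

lemma productState_ne_zero {u : ((Fin ν → Fin L) → S) → ℂ} (hu : u ≠ 0) :
    productState n L u ≠ 0 := by
  obtain ⟨t, ht⟩ := Function.ne_iff.mp hu
  intro h0
  have := congrFun h0 fun p => t (blockEquiv n L p).2
  simp only [productState, blockEquiv_boxEmbedding, Finset.prod_const, Pi.zero_apply] at this
  exact ht (pow_eq_zero_iff'.mp this).1

lemma boxEmbedding_notMem_range {b b' : Fin ν → Fin n} (hb : b' ≠ b) (r : Fin ν → Fin L) :
    boxEmbedding n L b' r ∉ Set.range (boxEmbedding n L b) := by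
  rw [mem_range_boxEmbedding_iff, blockEquiv_boxEmbedding]
  exact hb

lemma slice_productState (b : Fin ν → Fin n) (u : ((Fin ν → Fin L) → S) → ℂ)
    (y : {p // p ∉ Set.range (boxEmbedding n L b)} → S) :
    slice (configSplit (boxEmbedding n L b)) (productState n L u) y
      = (∏ b' : {b' // b' ≠ b}, u fun r => y ⟨_, boxEmbedding_notMem_range b'.2 r⟩) • u := by
  funext t
  simp only [slice, productState, Pi.smul_apply, smul_eq_mul]
  rw [Fintype.prod_eq_mul_prod_subtype_ne _ b, mul_comm]
  congr 1
  · exact Finset.prod_congr rfl fun b' _ =>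
      congrArg u (funext fun r => configSplit_symm_apply_of_not_mem _ _ _ _)
  · exact congrArg u (funext fun r => configSplit_symm_apply_self _ _ _ _)

end ProductState

section Bounds

variable {ν d : ℕ} {h : Fin ν → Matrix (Fin d × Fin d) (Fin d × Fin d) ℂ}
  {h1 : Matrix (Fin d) (Fin d) ℂ}

lemma hamND_isHermitian (L : ℕ) (hh : ∀ k, (h k).IsHermitian) (h1herm : h1.IsHermitian) :
    (hamND ν d L h h1).IsHermitian := by
  rw [hamND_eq]
  refine IsHermitian.add (isSelfAdjoint_sum _ fun k _ => isSelfAdjoint_sum _ fun p _ =>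
    isSelfAdjoint_sum _ fun q _ => ?_) (isSelfAdjoint_sum _ fun p _ => ?_)
  · split_ifs
    · exact (conjTranspose_twoBodyAt _ p q).trans (by rw [hh k])
    · exact isHermitian_zero
  · exact (conjTranspose_oneBodyAt _ p).trans (by rw [h1herm])

lemma hamND_eq_zero [IsEmpty (Fin d)] (L : ℕ) : hamND ν d L h h1 = 0 := by
  ext x y
  rcases isEmpty_or_nonempty (Fin ν → Fin L) with hs | hs
  · simp [hamND_eq]
  · exact isEmptyElim (x hs.some)

variable {n L : ℕ} [hne : Nonempty ((Fin ν → Fin L) → Fin d)]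

lemma mul_lam0_le_lam0_hamND_mul (h1herm : h1.IsHermitian) (hpsd : ∀ k, (h k).PosSemidef) :
    n ^ ν * lam0 (hamND ν d L h h1) ≤ lam0 (hamND ν d (n * L) h h1) := by
  have : Nonempty ((Fin ν → Fin (n * L)) → Fin d) :=
    ⟨fun p => hne.some (blockEquiv n L p).2⟩
  have hA := hamND_isHermitian L (fun k => (hpsd k).isHermitian) h1herm
  refine le_lam0_of_forall_mul_quadForm_one_le
    (hamND_isHermitian _ (fun k => (hpsd k).isHermitian) h1herm) fun v => ?_
  rw [hamND_mul_eq, quadForm_add, quadForm_sum]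
  calc n ^ ν * lam0 (hamND ν d L h h1) * quadForm 1 v
      = ∑ _b : Fin ν → Fin n, lam0 (hamND ν d L h h1) * quadForm 1 v := by
        simp only [Finset.sum_const, Finset.card_univ, Fintype.card_pi, Fintype.card_fin,
          Finset.prod_const, nsmul_eq_mul, Nat.cast_pow]
        ring
    _ ≤ ∑ b, quadForm (ampliation (configSplit (boxEmbedding n L b)) (hamND ν d L h h1)) v :=
        Finset.sum_le_sum fun b _ => lam0_mul_quadForm_one_le_ampliation hA _ v
    _ ≤ _ := le_add_of_nonneg_right (quadForm_boundaryHam_nonneg h hpsd v)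

lemma lam0_hamND_mul_le (h1herm : h1.IsHermitian) (hpsd : ∀ k, (h k).PosSemidef) {c : ℝ}
    (hc : ∀ k, opNorm (h k) ≤ c) :
    lam0 (hamND ν d (n * L) h h1)
      ≤ n ^ ν * lam0 (hamND ν d L h h1) + ν * (n ^ ν * L ^ (ν - 1) : ℕ) * c := by
  have hh k := (hpsd k).isHermitian
  obtain ⟨u, hu0, hu⟩ := exists_mulVec_eq_lam0_smul (hamND_isHermitian L hh h1herm)
  set v := productState n L u
  have hbox b : quadForm (ampliation (configSplit (boxEmbedding n L b)) (hamND ν d L h h1)) v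
      = lam0 (hamND ν d L h h1) * quadForm 1 v :=
    quadForm_ampliation_of_slice_eigen _ fun y => by
      rw [slice_productState, mulVec_smul, hu, smul_comm]
  have hv0 : 0 < quadForm 1 v := quadForm_one_pos (productState_ne_zero hu0)
  refine le_of_mul_le_mul_right ?_ hv0
  calc lam0 (hamND ν d (n * L) h h1) * quadForm 1 v
      ≤ quadForm (hamND ν d (n * L) h h1) v :=
        lam0_mul_quadForm_one_le (hamND_isHermitian _ hh h1herm) v
    _ ≤ ∑ _b : Fin ν → Fin n, lam0 (hamND ν d L h h1) * quadForm 1 v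
          + ν * (n ^ ν * L ^ (ν - 1) : ℕ) * c * quadForm 1 v := by
        rw [hamND_mul_eq, quadForm_add, quadForm_sum]
        simp only [hbox]
        exact add_le_add le_rfl (quadForm_boundaryHam_le h hc v)
    _ = _ := by
        simp only [Finset.sum_const, Finset.card_univ, Fintype.card_pi, Fintype.card_fin,
          Finset.prod_const, nsmul_eq_mul, Nat.cast_pow, Nat.cast_mul]
        ring

end Bounds

end GroundStateEnergy

open GroundStateEnergy

/-- Sub- and super-additivity bounds for the ground state energy of a
translationally-invariant nearest-neighbour Hamiltonian on `{1,…,L}^ν` with open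
boundary conditions, positive semi-definite two-body terms of norm at most `c`:
for `L = n·L'`,
`n^ν·λ₀(H^{Λ(L')}) ≤ λ₀(H^{Λ(L)}) ≤ n^ν·λ₀(H^{Λ(L')}) + 2ν·n^ν·L'^{ν−1}·c`. -/
theorem gs_energy_subadditivity
    (ν d : ℕ) (h : Fin ν → Matrix (Fin d × Fin d) (Fin d × Fin d) ℂ)
    (h1 : Matrix (Fin d) (Fin d) ℂ) (h1herm : h1.IsHermitian)
    (hpsd : ∀ k, (h k).PosSemidef)
    (c : ℝ) (hc : ∀ k, opNorm (h k) ≤ c)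
    (L' n : ℕ) :
    (n : ℝ) ^ ν * lam0 (hamND ν d L' h h1) ≤ lam0 (hamND ν d (n * L') h h1) ∧
    lam0 (hamND ν d (n * L') h h1) ≤
      (n : ℝ) ^ ν * lam0 (hamND ν d L' h h1)
        + 2 * (ν : ℝ) * (n : ℝ) ^ ν * (L' : ℝ) ^ (ν - 1) * c := by
  have hνc : 0 ≤ (ν : ℝ) * c := by
    simpa using Finset.sum_nonneg fun k (_ : k ∈ Finset.univ) => (norm_nonneg _).trans (hc k)
  have hslack : 0 ≤ (n : ℝ) ^ ν * (L' : ℝ) ^ (ν - 1) * (ν * c) := by positivity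
  rcases isEmpty_or_nonempty ((Fin ν → Fin L') → Fin d) with hA | hA
  · have : IsEmpty (Fin d) := ⟨fun i => hA.false fun _ => i⟩
    simp only [hamND_eq_zero, lam0_zero, mul_zero, zero_add, le_refl, true_and]
    linarith
  · refine ⟨mul_lam0_le_lam0_hamND_mul h1herm hpsd, (lam0_hamND_mul_le h1herm hpsd hc).trans ?_⟩
    push_cast
    linarith

end
end

section
/- Let H_trans and H_pen define a standard-form Hamiltonian on ℋ = (ℂ^C ⊗ ℂ^Q)^{⊗L} = ℋ_C ⊗ ℋ_Q. Let 𝒮 = {S_i} be the partition of the standard basis states of ℋ_C into minimal subsets closed under the transition rules, where a transition rule |ab⟩|ψ⟩ → |cd⟩U_{abcd}|ψ⟩ acts on ℋ_C by restriction to the (ℂ^C)^{⊗2} factors, i.e. as ab → cd at the relevant pair of adjacent sites. Then ℋ = (⊕_i K_{S_i}) ⊗ ℋ_Q decomposes H = H_pen + H_trans into invariant subspaces K_{S_i} ⊗ ℋ_Q, where K_{S_i} is the span of S_i. -/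
open scoped Classical

noncomputable section

/-- The data of the transition rules from `ab` to `cd` of a standard-form Hamiltonian:
a unitary `U = U_{abcd}` on `ℂ^Q ⊗ ℂ^Q` and an orthonormal basis `ψ = {ψⁱ_{abcd}}` of
`ℂ^Q ⊗ ℂ^Q`; the transition rules are `|ab⟩|ψⁱ⟩ → |cd⟩ U|ψⁱ⟩`. -/
structure TransRule (Q : ℕ) where
  U : Matrix (Fin Q × Fin Q) (Fin Q × Fin Q) ℂ
  ψ : (Fin Q × Fin Q) → (Fin Q × Fin Q) → ℂ

instance (Q : ℕ) : Inhabited (TransRule Q) := ⟨⟨0, fun _ _ => 0⟩⟩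

/-- Well-formedness of the transition-rule data: each `U_{abcd}` is unitary and each
`{ψⁱ_{abcd}}ᵢ` is an orthonormal basis (an orthonormal family of full cardinality). -/
def RulesWF {C Q : ℕ}
    (T : Fin C → Fin C → Fin C → Fin C → Option (TransRule Q)) : Prop :=
  ∀ (a b c d : Fin C) (tr : TransRule Q), T a b c d = some tr →
    tr.U ∈ Matrix.unitaryGroup (Fin Q × Fin Q) ℂ ∧
    ∀ i j : Fin Q × Fin Q,
      (∑ x : Fin Q × Fin Q, (starRingEnd ℂ) (tr.ψ i x) * tr.ψ j x)
        = if i = j then 1 else 0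

/-- The vector `|ab⟩ ⊗ ψ` on two sites `(ℂ^C ⊗ ℂ^Q)^{⊗2}`. -/
def cqVec {C Q : ℕ} (a b : Fin C) (ψ : (Fin Q × Fin Q) → ℂ) :
    ((Fin C × Fin Q) × (Fin C × Fin Q)) → ℂ :=
  fun z => if z.1.1 = a ∧ z.2.1 = b then ψ (z.1.2, z.2.2) else 0

/-- The local transition-rule term
`h_trans = Σ ½ (|ab⟩|ψⁱ⟩ − |cd⟩U|ψⁱ⟩)(⟨ab|⟨ψⁱ| − ⟨cd|⟨ψⁱ|U†)`. -/
def localTrans {C Q : ℕ}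
    (T : Fin C → Fin C → Fin C → Fin C → Option (TransRule Q)) :
    Matrix ((Fin C × Fin Q) × (Fin C × Fin Q))
           ((Fin C × Fin Q) × (Fin C × Fin Q)) ℂ :=
  ∑ a : Fin C, ∑ b : Fin C, ∑ c : Fin C, ∑ d : Fin C,
    Option.elim (T a b c d) 0 fun tr =>
      ∑ i : Fin Q × Fin Q,
        (1 / 2 : ℂ) •
          Matrix.vecMulVec
            (cqVec a b (tr.ψ i) - cqVec c d (tr.U.mulVec (tr.ψ i)))
            (star (cqVec a b (tr.ψ i) - cqVec c d (tr.U.mulVec (tr.ψ i))))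

/-- The local penalty term: a sum of projectors onto (pairs of) standard basis states
of `(ℂ^C)^{⊗2}`, acting trivially on `(ℂ^Q)^{⊗2}` and diagonal in the standard
basis. -/
def localPen {C Q : ℕ} (P : Set (Fin C × Fin C)) :
    Matrix ((Fin C × Fin Q) × (Fin C × Fin Q))
           ((Fin C × Fin Q) × (Fin C × Fin Q)) ℂ :=
  Matrix.of fun z z' => if z = z' ∧ (z.1.1, z.2.1) ∈ P then 1 else 0

/-- The standard-form Hamiltonian `H = H_trans + H_pen = Σ_i (h_trans + h_pen)^{(i,i+1)}`
on a chain of length `L` with local Hilbert space `ℂ^C ⊗ ℂ^Q`. -/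
def stdH (C Q L : ℕ)
    (T : Fin C → Fin C → Fin C → Fin C → Option (TransRule Q))
    (P : Set (Fin C × Fin C)) :
    Matrix (Fin L → Fin C × Fin Q) (Fin L → Fin C × Fin Q) ℂ :=
  ∑ p : Fin L, ∑ q : Fin L,
    if (q : ℕ) = (p : ℕ) + 1
    then twoBodyAt (localTrans T + localPen P) p q
    else 0

/-- The action of the transition rules on the standard basis of `ℋ_C`: `u ⟶ v` if some
transition rule `ab → cd` applies at a pair of adjacent sites (leaving all other sites
unchanged). -/
def cStep {C Q L : ℕ}
    (T : Fin C → Fin C → Fin C → Fin C → Option (TransRule Q))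
    (u v : Fin L → Fin C) : Prop :=
  ∃ p q : Fin L, (q : ℕ) = (p : ℕ) + 1 ∧
    (T (u p) (u q) (v p) (v q)).isSome ∧
    ∀ k, k ≠ p → k ≠ q → u k = v k


/-- **Invariant subspaces** (Lemma `invariant_subspaces`).  For a standard-form
Hamiltonian `H = H_trans + H_pen` on `ℋ = ℋ_C ⊗ ℋ_Q`, the Hilbert space decomposes as
`ℋ = (⊕_i K_{S_i}) ⊗ ℋ_Q` into invariant subspaces `K_{S_i} ⊗ ℋ_Q` of `H`, where the
`S_i` are the minimal subsets of the standard basis of `ℋ_C` closed under the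
transition rules (i.e. the equivalence classes of the equivalence relation generated
by `cStep`), and `K_{S_i}` is the span of `S_i`.  Equivalently, as stated here: all
matrix elements of `H` between basis states whose `ℋ_C`-parts lie in different
classes vanish. -/
theorem invariant_subspaces
    (C Q L : ℕ)
    (T : Fin C → Fin C → Fin C → Fin C → Option (TransRule Q))
    (P : Set (Fin C × Fin C))
    (hT : RulesWF T) :
    ∀ x y : Fin L → Fin C × Fin Q,
      ¬ Relation.EqvGen (cStep T) (fun i => (x i).1) (fun i => (y i).1) →
      stdH C Q L T P x y = 0 := by
  intro x y hne
  unfold stdH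
  rw [Matrix.sum_apply]
  apply Finset.sum_eq_zero
  intro p _
  rw [Matrix.sum_apply]
  apply Finset.sum_eq_zero
  intro q _
  by_cases hq : (q : ℕ) = (p : ℕ) + 1
  · rw [if_pos hq]
    simp only [twoBodyAt, Matrix.of_apply]
    by_cases hk : ∀ k, k ≠ p → k ≠ q → x k = y k
    · rw [if_pos hk, one_mul, Matrix.add_apply]
      have hPen : localPen (Q := Q) P (x p, x q) (y p, y q) = 0 := by
        unfold localPen
        simp only [Matrix.of_apply]
        rw [if_neg]
        rintro ⟨heq, -⟩
        apply hne
        have hxy : x = y := by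
          funext k
          by_cases hkp : k = p
          · subst hkp; exact congrArg Prod.fst heq
          by_cases hkq : k = q
          · subst hkq; exact congrArg Prod.snd heq
          exact hk k hkp hkq
        rw [hxy]
        exact Relation.EqvGen.refl _
      have hTr : localTrans T (x p, x q) (y p, y q) = 0 := by
        unfold localTrans
        rw [Matrix.sum_apply]
        apply Finset.sum_eq_zero; intro a _
        rw [Matrix.sum_apply]
        apply Finset.sum_eq_zero; intro b _
        rw [Matrix.sum_apply]
        apply Finset.sum_eq_zero; intro c _
        rw [Matrix.sum_apply]
        apply Finset.sum_eq_zero; intro d _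
        cases hT' : T a b c d with
        | none => simp
        | some tr =>
          simp only [Option.elim]
          rw [Matrix.sum_apply]
          apply Finset.sum_eq_zero; intro i _
          set v : ((Fin C × Fin Q) × (Fin C × Fin Q)) → ℂ :=
            cqVec a b (tr.ψ i) - cqVec c d (tr.U.mulVec (tr.ψ i)) with hv
          have hsupp : ∀ z, v z ≠ 0 →
              (z.1.1 = a ∧ z.2.1 = b) ∨ (z.1.1 = c ∧ z.2.1 = d) := by
            intro z hz
            by_contra h
            rw [not_or] at h
            apply hz
            simp only [hv, Pi.sub_apply, cqVec, if_neg h.1, if_neg h.2, sub_zero]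
          rw [Matrix.smul_apply, Matrix.vecMulVec_apply]
          rcases eq_or_ne (v (x p, x q)) 0 with h1 | h1
          · simp [h1]
          rcases eq_or_ne (v (y p, y q)) 0 with h2 | h2
          · simp [h2]
          exfalso
          apply hne
          have hx := hsupp _ h1
          have hy := hsupp _ h2
          simp only at hx hy
          have hk' : ∀ k, k ≠ p → k ≠ q → (x k).1 = (y k).1 :=
            fun k h1 h2 => congrArg Prod.fst (hk k h1 h2)
          rcases hx with ⟨hxa, hxb⟩ | ⟨hxc, hxd⟩ <;>
            rcases hy with ⟨hya, hyb⟩ | ⟨hyc, hyd⟩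
          · have : (fun i => (x i).1) = (fun i => (y i).1) := by
              funext k
              by_cases hkp : k = p
              · subst hkp; rw [hxa, hya]
              by_cases hkq : k = q
              · subst hkq; rw [hxb, hyb]
              exact hk' k hkp hkq
            rw [this]; exact Relation.EqvGen.refl _
          · refine Relation.EqvGen.rel _ _ ⟨p, q, hq, ?_, fun k h1 h2 => hk' k h1 h2⟩
            simp only [hxa, hxb, hyc, hyd, hT', Option.isSome_some]
          · refine Relation.EqvGen.symm _ _
              (Relation.EqvGen.rel _ _ ⟨p, q, hq, ?_, fun k h1 h2 => (hk' k h1 h2).symm⟩)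
            simp only [hya, hyb, hxc, hxd, hT', Option.isSome_some]
          · have : (fun i => (x i).1) = (fun i => (y i).1) := by
              funext k
              by_cases hkp : k = p
              · subst hkp; rw [hxc, hyc]
              by_cases hkq : k = q
              · subst hkq; rw [hxd, hyd]
              exact hk' k hkp hkq
            rw [this]; exact Relation.EqvGen.refl _
      rw [hPen, hTr, add_zero]
    · rw [if_neg hk, zero_mul]
  · rw [if_neg hq, Matrix.zero_apply]

end
end
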